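/- arXiv:2510.24643 — 7 statements merged into one kernel-verified Lean document; each statement's English description precedes it below -/
import Mathlib

section
/- Let 1 ≤ t ≤ d and let Z ⊆ ℝ^d be a k-dimensional linear subspace with k ≥ d − t. Then max_{j∈{1,…,t}} ‖Proj_Z(e_j)‖₂ ≥ √((k − (d − t))/t), and consequently min_{j∈{1,…,t}} dist₂(e_j, Z) ≤ √((d − k)/t). -/
/-!
The squared norms `‖Proj_Z e_j‖²` lie in `[0, 1]` and sum over all `j` to the trace of the
projection, i.e. to `k = dim Z`. The `d - t` indices outside `{1,…,t}` contribute at most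
`d - t`, so the first `t` contribute at least `k - (d - t)`, and one of them at least the
average `(k - (d - t))/t`. By Pythagoras, `dist(e_j, Z)² = 1 - ‖Proj_Z e_j‖² ≤ (d - k)/t`
for that same `j`.
-/

open Finset

namespace OrthonormalBasis

variable {ι 𝕜 E : Type*} [Fintype ι] [RCLike 𝕜] [NormedAddCommGroup E] [InnerProductSpace 𝕜 E]

theorem sum_norm_sq_orthogonalProjectionOnto (b : OrthonormalBasis ι 𝕜 E) (K : Submodule 𝕜 E)
    [FiniteDimensional 𝕜 K] :
    ∑ i, ‖K.orthogonalProjectionOnto (b i)‖ ^ 2 = Module.finrank 𝕜 K := by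
  let c := stdOrthonormalBasis 𝕜 K
  calc ∑ i, ‖K.orthogonalProjectionOnto (b i)‖ ^ 2
      = ∑ i, ∑ l, ‖inner 𝕜 (c l : E) (b i)‖ ^ 2 := by
        refine sum_congr rfl fun i _ => ?_
        simp_rw [← c.sum_sq_norm_inner_right, K.inner_orthogonalProjectionOnto_eq_of_mem_left]
    _ = ∑ l, ‖(c l : E)‖ ^ 2 := by
        rw [sum_comm]
        simp only [b.sum_sq_norm_inner_left]
    _ = Module.finrank 𝕜 K := by
        simp [← Submodule.coe_norm, c.orthonormal.1]

end OrthonormalBasis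

theorem Submodule.infDist_le_sqrt_norm_sq_sub_norm_sq_orthogonalProjectionOnto
    {𝕜 E : Type*} [RCLike 𝕜] [NormedAddCommGroup E] [InnerProductSpace 𝕜 E]
    (K : Submodule 𝕜 E) [K.HasOrthogonalProjection] (x : E) :
    Metric.infDist x K ≤ √(‖x‖ ^ 2 - ‖K.orthogonalProjectionOnto x‖ ^ 2) := by
  have hpyth : ‖x‖ ^ 2 - ‖K.orthogonalProjectionOnto x‖ ^ 2 = ‖x - K.starProjection x‖ ^ 2 := by
    rw [K.norm_sq_eq_add_norm_sq_projection x, K.orthogonalProjectionOnto_orthogonal]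
    simp
  rw [hpyth, Real.sqrt_sq (norm_nonneg _), ← dist_eq_norm]
  exact Metric.infDist_le_dist_of_mem (K.orthogonalProjectionOnto x).2

theorem Finset.exists_mem_sum_sub_card_compl_div_card_le {ι : Type*} [Fintype ι] [DecidableEq ι]
    {s : Finset ι} (hs : s.Nonempty) {f : ι → ℝ} (hf : ∀ i ∉ s, f i ≤ 1) :
    ∃ j ∈ s, (∑ i, f i - #sᶜ) / #s ≤ f j := by
  have hcompl : ∑ i ∈ sᶜ, f i ≤ #sᶜ := by
    simpa using sum_le_sum fun i hi => hf i (mem_compl.1 hi)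
  have hsum : ∑ i, f i - #sᶜ ≤ ∑ i ∈ s, f i := by
    rw [← sum_add_sum_compl s f]
    linarith
  refine exists_le_of_sum_le hs ?_
  rw [sum_const, nsmul_eq_mul, mul_div_cancel₀ _ (by exact_mod_cast hs.card_pos.ne')]
  exact hsum

theorem max_proj_norm_ge_and_min_dist_le_first_t_general
    (d t k : ℕ) (ht1 : 1 ≤ t) (htd : t ≤ d)
    (Z : Submodule ℝ (EuclideanSpace ℝ (Fin d)))
    (hk : Module.finrank ℝ Z = k) :
    (∃ j : Fin d, (j : ℕ) < t ∧
      Real.sqrt (((k : ℝ) - ((d : ℝ) - (t : ℝ))) / t) ≤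
        ‖(Z.orthogonalProjection (EuclideanSpace.single j 1) :
            EuclideanSpace ℝ (Fin d))‖) ∧
    (∃ j : Fin d, (j : ℕ) < t ∧
      Metric.infDist (EuclideanSpace.single j 1) (Z : Set (EuclideanSpace ℝ (Fin d))) ≤
        Real.sqrt (((d : ℝ) - (k : ℝ)) / t)) := by
  set s : Finset (Fin d) := univ.filter fun j => (j : ℕ) < t
  have hs : #s = t := by
    simpa [s, Fin.card_filter_val_lt] using htd
  have hsc : #sᶜ = d - t := by
    rw [card_compl, hs, Fintype.card_fin]
  have ht : (t : ℝ) ≠ 0 := by positivity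
  set f : Fin d → ℝ := fun j => ‖Z.orthogonalProjectionOnto (EuclideanSpace.single j 1)‖ ^ 2
  have hsum : ∑ j, f j = k := by
    simpa [f, hk] using (EuclideanSpace.basisFun (Fin d) ℝ).sum_norm_sq_orthogonalProjectionOnto Z
  have hf_le : ∀ j, f j ≤ 1 := fun j =>
    pow_le_one₀ (norm_nonneg _) ((Z.norm_orthogonalProjectionOnto_apply_le _).trans_eq (by simp))
  obtain ⟨j, hjs, hj⟩ := exists_mem_sum_sub_card_compl_div_card_le
    (card_pos.1 (hs ▸ ht1)) fun i _ => hf_le i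
  rw [hsum, hs, hsc, Nat.cast_sub htd] at hj
  have hjt : (j : ℕ) < t := (mem_filter.1 hjs).2
  refine ⟨⟨j, hjt, (Real.sqrt_le_left (norm_nonneg _)).2 hj⟩, ⟨j, hjt, ?_⟩⟩
  refine (Z.infDist_le_sqrt_norm_sq_sub_norm_sq_orthogonalProjectionOnto _).trans
    (Real.sqrt_le_sqrt ?_)
  have hdiv : ((d : ℝ) - k) / t = 1 - (k - (d - t)) / t := by
    field_simp
    ring
  simp only [PiLp.norm_single, norm_one, one_pow, hdiv]
  linarith

/-- For `1 ≤ t ≤ d` and a `k`-dimensional subspace `Z ⊆ ℝ^d` with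
`k ≥ d - t`, some standard basis vector `e_j` with `j ∈ {1,…,t}` has orthogonal
projection onto `Z` of norm at least `√((k-(d-t))/t)`, and consequently some such
`e_j` is within distance `√((d-k)/t)` of `Z`. -/
theorem max_proj_norm_ge_and_min_dist_le_first_t
    (d t k : ℕ) (ht1 : 1 ≤ t) (htd : t ≤ d)
    (Z : Submodule ℝ (EuclideanSpace ℝ (Fin d)))
    (hk : Module.finrank ℝ Z = k) (hktd : d - t ≤ k) :
    (∃ j : Fin d, (j : ℕ) < t ∧
      Real.sqrt (((k : ℝ) - ((d : ℝ) - (t : ℝ))) / t) ≤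
        ‖(Z.orthogonalProjection (EuclideanSpace.single j 1) :
            EuclideanSpace ℝ (Fin d))‖) ∧
    (∃ j : Fin d, (j : ℕ) < t ∧
      Metric.infDist (EuclideanSpace.single j 1) (Z : Set (EuclideanSpace ℝ (Fin d))) ≤
        Real.sqrt (((d : ℝ) - (k : ℝ)) / t)) :=
  max_proj_norm_ge_and_min_dist_le_first_t_general d t k ht1 htd Z hk
end

section
/- Let d ≥ 1 and let Z be a k-dimensional linear subspace of ℝ^d with k ≥ 1. Then min_{j∈{1,…,d}} dist_∞(e_j, Z) ≤ 1/2. -/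
/-- For `d ≥ 1` and a `k`-dimensional subspace `Z` of `ℝ^d` (with the
`ℓ∞` norm, i.e. the sup norm on `Fin d → ℝ`) with `k ≥ 1`, some standard basis vector
is within `ℓ∞`-distance `1/2` of `Z`. -/
theorem min_inf_dist_le_half
    (d k : ℕ) (hd : 1 ≤ d)
    (Z : Submodule ℝ (Fin d → ℝ))
    (hk : Module.finrank ℝ Z = k) (hk1 : 1 ≤ k) :
    ∃ j : Fin d,
      Metric.infDist (Pi.single j 1) (Z : Set (Fin d → ℝ)) ≤ 1 / 2 := by
  have hpos : 0 < Module.finrank ℝ Z := by omega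
  have hnt : Nontrivial Z := Module.nontrivial_of_finrank_pos hpos
  obtain ⟨⟨z, hzZ⟩, hz0⟩ := exists_ne (0 : Z)
  have hz0' : z ≠ 0 := by
    intro h; apply hz0; ext; simp [h]
  -- pick j maximizing |z j|
  have : Nonempty (Fin d) := ⟨⟨0, hd⟩⟩
  obtain ⟨j, hj⟩ := Finite.exists_max (fun i => |z i|)
  have hzj : z j ≠ 0 := by
    intro h
    apply hz0'
    funext i
    have := hj i
    rw [h] at this
    simp only [abs_zero] at this
    exact abs_nonpos_iff.mp this
  set w : Fin d → ℝ := (z j)⁻¹ • z with hw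
  have hwZ : w ∈ Z := Z.smul_mem _ hzZ
  have hwj : w j = 1 := by simp [hw, Pi.smul_apply, inv_mul_cancel₀ hzj]
  have hwle : ∀ i, |w i| ≤ 1 := by
    intro i
    have := hj i
    simp only [hw, Pi.smul_apply, smul_eq_mul, abs_mul, abs_inv]
    rw [inv_mul_le_iff₀ (abs_pos.mpr hzj)]
    linarith [hj i]
  refine ⟨j, ?_⟩
  have hmem : (1 / 2 : ℝ) • w ∈ (Z : Set (Fin d → ℝ)) := Z.smul_mem _ hwZ
  calc Metric.infDist (Pi.single j 1) (Z : Set (Fin d → ℝ))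
      ≤ dist (Pi.single j 1) ((1 / 2 : ℝ) • w) := Metric.infDist_le_dist_of_mem hmem
    _ ≤ 1 / 2 := by
        rw [dist_eq_norm]
        apply pi_norm_le_iff_of_nonneg (by norm_num) |>.mpr
        intro i
        rcases eq_or_ne i j with rfl | hij
        · simp [hwj]
          rw [abs_of_nonneg] <;> norm_num
        · simp [Pi.single_eq_of_ne hij]
          exact hwle i
end

section
/- Let 1 ≤ t ≤ d and let Z ⊆ ℝ^d be a k-dimensional linear subspace with k ≥ d − t + 1. Then min_{j∈{1,…,t}} dist_∞(e_j, Z) ≤ 1/2. -/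
/-- For `1 ≤ t ≤ d` and a `k`-dimensional subspace `Z` of `ℝ^d` (with
the `ℓ∞` norm, i.e. the sup norm on `Fin d → ℝ`) with `k ≥ d - t + 1`, some standard
basis vector `e_j` with `j ∈ {1,…,t}` is within `ℓ∞`-distance `1/2` of `Z`. -/
theorem min_inf_dist_le_half_first_t
    (d t k : ℕ) (ht1 : 1 ≤ t) (htd : t ≤ d)
    (Z : Submodule ℝ (Fin d → ℝ))
    (hk : Module.finrank ℝ Z = k) (hktd : d - t + 1 ≤ k) :
    ∃ j : Fin d, (j : ℕ) < t ∧
      Metric.infDist (Pi.single j 1) (Z : Set (Fin d → ℝ)) ≤ 1 / 2 := by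
  classical
  have hd : 0 < d := lt_of_lt_of_le ht1 htd
  -- the linear map restricting a vector to its coordinates `≥ t`
  set f : Z →ₗ[ℝ] (Fin (d - t) → ℝ) :=
    { toFun := fun z i => (z : Fin d → ℝ) ⟨t + i, by omega⟩
      map_add' := fun a b => rfl
      map_smul' := fun c a => rfl } with hf
  have hnotinj : ¬ Function.Injective f := by
    intro hinj
    have h := LinearMap.finrank_le_finrank_of_injective hinj
    rw [hk, Module.finrank_fin_fun] at h
    omega
  have hker : LinearMap.ker f ≠ ⊥ := by
    intro h
    exact hnotinj ((LinearMap.ker_eq_bot).1 h)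
  obtain ⟨x, hxker, hxne⟩ := Submodule.exists_mem_ne_zero_of_ne_bot hker
  set v : Fin d → ℝ := (x : Fin d → ℝ) with hv
  -- `v` vanishes on coordinates `≥ t`
  have hvanish : ∀ i : Fin d, t ≤ (i : ℕ) → v i = 0 := by
    intro i hi
    have hval : f x ⟨(i : ℕ) - t, by omega⟩ = 0 := by
      rw [LinearMap.mem_ker.1 hxker]; rfl
    have : (⟨t + ((i : ℕ) - t), by omega⟩ : Fin d) = i := by
      ext; simp; omega
    rwa [hf, LinearMap.coe_mk, AddHom.coe_mk, this] at hval
  have hvne : v ≠ 0 := by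
    intro h
    exact hxne (Subtype.ext h)
  -- pick the coordinate of maximal absolute value
  obtain ⟨j, -, hj⟩ := Finset.exists_max_image Finset.univ (fun i => |v i|)
    ⟨⟨0, hd⟩, Finset.mem_univ _⟩
  have hj' : ∀ i, |v i| ≤ |v j| := fun i => hj i (Finset.mem_univ i)
  have hvj : v j ≠ 0 := by
    intro h
    apply hvne
    funext i
    have := hj' i
    rw [h, abs_zero] at this
    exact abs_nonpos_iff.1 this
  have hjt : (j : ℕ) < t := by
    by_contra h
    exact hvj (hvanish j (le_of_not_gt h))
  refine ⟨j, hjt, ?_⟩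
  set z : Fin d → ℝ := (2 * v j)⁻¹ • v with hz
  have hzmem : z ∈ (Z : Set (Fin d → ℝ)) := Z.smul_mem _ x.2
  refine le_trans (Metric.infDist_le_dist_of_mem hzmem) ?_
  rw [dist_eq_norm]
  refine pi_norm_le_iff_of_nonneg (by norm_num)|>.2 fun i => ?_
  rcases eq_or_ne i j with rfl | hij
  · have h1 : ((Pi.single i 1 : Fin d → ℝ) - z) i = 1 - (2 * v i)⁻¹ * v i := by
      simp [hz, Pi.single_eq_same]
    rw [Real.norm_eq_abs, h1]
    rw [inv_mul_eq_div, mul_comm 2 (v i), div_mul_eq_div_div, div_self hvj]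
    rw [abs_le]; constructor <;> norm_num
  · have h1 : ((Pi.single j 1 : Fin d → ℝ) - z) i = -((2 * v j)⁻¹ * v i) := by
      simp [hz, Pi.single_eq_of_ne hij]
    rw [Real.norm_eq_abs, h1, abs_neg, abs_mul, abs_inv, abs_mul]
    rw [abs_two]
    have h2 : 0 < |v j| := abs_pos.2 hvj
    have h3 : (2 * |v j|)⁻¹ * |v i| ≤ (2 * |v j|)⁻¹ * |v j| :=
      mul_le_mul_of_nonneg_left (hj' i) (by positivity)
    have h4 : (2 * |v j|)⁻¹ * |v j| = 1 / 2 := by field_simp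
    linarith
end

section
/- Let N, d ≥ 1 and let x_1, …, x_N ∈ ℝ^d be arbitrary points, with coordinates x_{i,j} for j ∈ {1,…,d}. Then (i) there exists a vector b ∈ ℝ^d such that dist(x_{i,j} − b_j, ℤ) ≥ 1/(2N) for all i ∈ {1,…,N} and j ∈ {1,…,d}; and (ii) there exists a vector b̄ ∈ ℝ^d each of whose coordinates is an integer multiple of 2^{−⌈log₂(6N)⌉} such that dist(x_{i,j} − b̄_j, ℤ) ≥ 1/(3N) for all i ∈ {1,…,N} and j ∈ {1,…,d}. -/
/-!
Fix one of the points `y₀` and try the `N` translations `b_k = y₀ - (2k+1)/(2N)`, `k < N`.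
They are spaced `1/N` apart, so a point `y` is closer than `1/(2N)` to `b_k + ℤ` for at most one
`k`, and `y₀` itself for none; by pigeonhole some `b_k` is good for all `N` points. Rounding this
`b` to the dyadic grid of mesh `δ = 2^{-⌈log₂(6N)⌉} ≤ 1/(6N)` moves it by at most `δ/2`.
-/

open Real

theorem exists_forall_not_of_card_le {ι κ : Type*} [Fintype ι] [Fintype κ]
    (hcard : Fintype.card ι ≤ Fintype.card κ) (P : ι → κ → Prop) (i₀ : ι)
    (h₀ : ∀ k, ¬P i₀ k) (huniq : ∀ i k k', P i k → P i k' → k = k') :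
    ∃ k, ∀ i, ¬P i k := by
  by_contra! h
  choose f hf using h
  have hinj : Function.Injective f := fun k k' hkk' => huniq _ _ _ (hf k) (hkk' ▸ hf k')
  have hnsurj : ¬Function.Surjective f := fun hsurj => by
    obtain ⟨k, hk⟩ := hsurj i₀
    exact h₀ k (hk ▸ hf k)
  have := Fintype.card_lt_of_injective_not_surjective f hinj hnsurj
  omega

theorem le_abs_sub_intCast_of_le_of_le {r t : ℝ} (m : ℤ) (h₁ : r ≤ t - m) (h₂ : t - m ≤ 1 - r)
    (n : ℤ) : r ≤ |t - n| := by
  rcases le_or_gt n m with hnm | hmn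
  · have : (n : ℝ) ≤ m := by exact_mod_cast hnm
    exact le_abs.mpr (Or.inl (by linarith))
  · have : (m : ℝ) + 1 ≤ n := by exact_mod_cast hmn
    exact le_abs.mpr (Or.inr (by linarith))

theorem exists_forall_le_abs_sub_sub_intCast {ι : Type*} [Fintype ι] [Nonempty ι] (y : ι → ℝ) :
    ∃ b : ℝ, ∀ i, ∀ n : ℤ, 1 / (2 * (Fintype.card ι : ℝ)) ≤ |y i - b - n| := by
  set N := Fintype.card ι
  set r : ℝ := 1 / (2 * N)
  have hN : (0 : ℝ) < N := by exact_mod_cast Fintype.card_pos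
  have hr : 0 < r := by positivity
  have h2rN : 2 * r * N = 1 := by simp only [r]; field_simp
  set c : Fin N → ℝ := fun k => (2 * k + 1) * r
  have hc_ge (k : Fin N) : r ≤ c k := by
    simp only [c]; nlinarith [k.val.cast_nonneg (α := ℝ)]
  have hc_le (k : Fin N) : c k ≤ 1 - r := by
    have : (k : ℝ) + 1 ≤ N := by exact_mod_cast k.isLt
    simp only [c]; nlinarith
  have hc_sep {k k' : Fin N} (h : k < k') : c k + 2 * r ≤ c k' := by
    have : (k : ℝ) + 1 ≤ k' := by exact_mod_cast h
    simp only [c]; nlinarith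
  obtain ⟨i₀⟩ := ‹Nonempty ι›
  set v : ι → ℝ := fun i => Int.fract (y i - y i₀)
  -- `y i` is too close to `y i₀ - c k + ℤ` exactly when `v i + c k` falls in this window
  let Bad (i : ι) (k : Fin N) : Prop := 1 - r < v i + c k ∧ v i + c k < 1 + r
  have hbad₀ (k : Fin N) : ¬Bad i₀ k := fun h => by
    simp only [Bad, v, sub_self, Int.fract_zero, zero_add] at h
    linarith [h.1, hc_le k]
  have hbad_uniq (i : ι) (k k' : Fin N) (hk : Bad i k) (hk' : Bad i k') : k = k' := by
    by_contra hne
    rcases Fin.lt_or_lt_of_ne hne with hlt | hlt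
    · linarith [hk.1, hk'.2, hc_sep hlt]
    · linarith [hk.2, hk'.1, hc_sep hlt]
  obtain ⟨k, hk⟩ := exists_forall_not_of_card_le (by simp [N]) Bad i₀ hbad₀ hbad_uniq
  refine ⟨y i₀ - c k, fun i => ?_⟩
  have hv : y i - (y i₀ - c k) - ⌊y i - y i₀⌋ = v i + c k := by
    simp only [v, Int.fract]; ring
  have hv₀ : 0 ≤ v i := Int.fract_nonneg _
  have hv₁ : v i < 1 := Int.fract_lt_one _
  have := hc_ge k
  have := hc_le k
  by_cases hlow : v i + c k ≤ 1 - r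
  · exact le_abs_sub_intCast_of_le_of_le ⌊y i - y i₀⌋ (by linarith) (by linarith)
  · have hhigh : 1 + r ≤ v i + c k := not_lt.mp fun h => hk i ⟨not_le.mp hlow, h⟩
    refine le_abs_sub_intCast_of_le_of_le (⌊y i - y i₀⌋ + 1) ?_ ?_ <;> push_cast <;> linarith

theorem zpow_neg_ceil_logb_le_inv {b a : ℝ} (hb : 1 < b) (ha : 0 < a) :
    b ^ (-⌈logb b a⌉) ≤ a⁻¹ := by
  rw [zpow_neg]
  refine inv_anti₀ ha ?_
  calc a = b ^ logb b a := (rpow_logb (by linarith) hb.ne' ha).symm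
    _ ≤ b ^ (⌈logb b a⌉ : ℝ) := rpow_le_rpow_of_exponent_le hb.le (Int.le_ceil _)
    _ = b ^ ⌈logb b a⌉ := rpow_intCast b _

theorem exists_abs_sub_intCast_mul_le {δ : ℝ} (hδ : 0 < δ) (b : ℝ) :
    ∃ z : ℤ, |b - z * δ| ≤ δ / 2 := by
  refine ⟨round (b / δ), ?_⟩
  calc |b - round (b / δ) * δ| = |b / δ - round (b / δ)| * δ := by
        rw [← abs_of_pos hδ, ← abs_mul, abs_of_pos hδ, sub_mul, div_mul_cancel₀ _ hδ.ne']
    _ ≤ 1 / 2 * δ := mul_le_mul_of_nonneg_right (abs_sub_round _) hδ.le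
    _ = δ / 2 := by ring

theorem sub_le_abs_sub_intCast_of_abs_sub_le {c e t t' : ℝ} (h : ∀ n : ℤ, c ≤ |t - n|)
    (htt' : |t - t'| ≤ e) (n : ℤ) : c - e ≤ |t' - n| := by
  have := abs_sub_abs_le_abs_sub (t - n) (t' - n)
  rw [sub_sub_sub_cancel_right] at this
  linarith [h n]

theorem exists_translation_far_from_lattice_general
    (N d : ℕ) (hN : 1 ≤ N) (x : Fin N → Fin d → ℝ) :
    (∃ b : Fin d → ℝ, ∀ i : Fin N, ∀ j : Fin d, ∀ n : ℤ,
        1 / (2 * (N : ℝ)) ≤ |x i j - b j - (n : ℝ)|) ∧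
    (∃ bbar : Fin d → ℝ,
      (∀ j : Fin d, ∃ z : ℤ,
          bbar j = (z : ℝ) * (2 : ℝ) ^ (-⌈Real.logb 2 (6 * (N : ℝ))⌉)) ∧
      (∀ i : Fin N, ∀ j : Fin d, ∀ n : ℤ,
          1 / (3 * (N : ℝ)) ≤ |x i j - bbar j - (n : ℝ)|)) := by
  have : Nonempty (Fin N) := ⟨⟨0, hN⟩⟩
  have hN₀ : (0 : ℝ) < N := by exact_mod_cast hN
  choose b hb using fun j => exists_forall_le_abs_sub_sub_intCast (fun i => x i j)
  simp only [Fintype.card_fin] at hb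
  set δ : ℝ := 2 ^ (-⌈logb 2 (6 * (N : ℝ))⌉)
  have hδ : δ ≤ (6 * (N : ℝ))⁻¹ := zpow_neg_ceil_logb_le_inv one_lt_two (by positivity)
  choose z hz using fun j => exists_abs_sub_intCast_mul_le (show 0 < δ by positivity) (b j)
  refine ⟨⟨b, fun i j => hb j i⟩, fun j => z j * δ, fun j => ⟨z j, rfl⟩, fun i j n => ?_⟩
  have hclose : |(x i j - b j) - (x i j - z j * δ)| ≤ δ / 2 := by
    rw [sub_sub_sub_cancel_left, abs_sub_comm]; exact hz j
  have hslack : 1 / (3 * (N : ℝ)) + (6 * (N : ℝ))⁻¹ / 2 ≤ 1 / (2 * N) := by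
    field_simp; norm_num
  calc 1 / (3 * (N : ℝ)) ≤ 1 / (2 * N) - δ / 2 := by linarith
    _ ≤ |x i j - z j * δ - n| := sub_le_abs_sub_intCast_of_abs_sub_le (hb j i) hclose n

/-- **Avoiding being near the grid.** For any `N` points `x_1,…,x_N ∈ ℝ^d`:
(i) there is a translation `b ∈ ℝ^d` with `dist(x_{i,j} - b_j, ℤ) ≥ 1/(2N)` for all `i, j`;
(ii) there is a translation `b̄ ∈ ℝ^d`, each coordinate of which is an integer multiple of
`2^{-⌈log₂(6N)⌉}`, with `dist(x_{i,j} - b̄_j, ℤ) ≥ 1/(3N)` for all `i, j`.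
Here `dist(r, ℤ) ≥ c` is expressed as `∀ n : ℤ, c ≤ |r - n|`. -/
theorem exists_translation_far_from_lattice
    (N d : ℕ) (hN : 1 ≤ N) (hd : 1 ≤ d) (x : Fin N → Fin d → ℝ) :
    (∃ b : Fin d → ℝ, ∀ i : Fin N, ∀ j : Fin d, ∀ n : ℤ,
        1 / (2 * (N : ℝ)) ≤ |x i j - b j - (n : ℝ)|) ∧
    (∃ bbar : Fin d → ℝ,
      (∀ j : Fin d, ∃ z : ℤ,
          bbar j = (z : ℝ) * (2 : ℝ) ^ (-⌈Real.logb 2 (6 * (N : ℝ))⌉)) ∧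
      (∀ i : Fin N, ∀ j : Fin d, ∀ n : ℤ,
          1 / (3 * (N : ℝ)) ≤ |x i j - bbar j - (n : ℝ)|)) :=
  exists_translation_far_from_lattice_general N d hN x
end

section
/- Define Δ : ℝ → ℝ by Δ(x) = 2x if x ∈ (0, 1/2], Δ(x) = 2x − 1 if x ∈ (1/2, 1], and Δ(x) = 0 otherwise. Then for every integer n ≥ 1 and every real x ∈ [0, 2^n), the n-fold composition satisfies Δ^{∘n}(−x/2^n + 1) + x − 1 = ⌊x⌋. -/
open Classical in
/-- The ideal discontinuous building block `Δ`. -/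
noncomputable def idealDelta : ℝ → ℝ := fun x =>
  if 0 < x ∧ x ≤ 1 / 2 then 2 * x
  else if 1 / 2 < x ∧ x ≤ 1 then 2 * x - 1
  else 0

lemma idealDelta_one_sub (t : ℝ) (h0 : 0 ≤ t) (h1 : t < 1) :
    idealDelta (1 - t) = 1 - Int.fract (2 * t) := by
  unfold idealDelta
  by_cases h : t < 1 / 2
  · have hf : Int.fract (2 * t) = 2 * t := Int.fract_eq_self.mpr ⟨by linarith, by linarith⟩
    rw [if_neg (by intro ⟨a, b⟩; linarith), if_pos ⟨by linarith, by linarith⟩]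
    rw [hf]; ring
  · push_neg at h
    have hf : Int.fract (2 * t) = 2 * t - 1 := by
      have : ⌊(2 : ℝ) * t⌋ = 1 := by
        apply Int.floor_eq_iff.mpr
        constructor <;> push_cast <;> linarith
      rw [Int.fract, this]; push_cast; ring
    rw [if_pos ⟨by linarith, by linarith⟩, hf]; ring

lemma idealDelta_iter (n : ℕ) : ∀ t : ℝ, 0 ≤ t → t < 1 →
    idealDelta^[n] (1 - t) = 1 - Int.fract (2 ^ n * t) := by
  induction n with
  | zero => intro t h0 h1; simp [Int.fract_eq_self.mpr ⟨h0, h1⟩]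
  | succ n ih =>
    intro t h0 h1
    rw [Function.iterate_succ_apply, idealDelta_one_sub t h0 h1,
      ih _ (Int.fract_nonneg _) (Int.fract_lt_one _)]
    have key : (2 : ℝ) ^ n * Int.fract (2 * t)
        = 2 ^ (n + 1) * t - ((2 ^ n * ⌊2 * t⌋ : ℤ) : ℝ) := by
      rw [Int.fract]; push_cast; ring
    rw [key, Int.fract_sub_intCast]

/-- For every `n ≥ 1` and `x ∈ [0, 2^n)`, the `n`-fold composition of `Δ`
satisfies `Δ^{∘n}(-x/2^n + 1) + x - 1 = ⌊x⌋`. -/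
theorem idealDelta_iterate_floor
    (n : ℕ) (hn : 1 ≤ n) (x : ℝ) (hx0 : 0 ≤ x) (hx1 : x < 2 ^ n) :
    idealDelta^[n] (-x / 2 ^ n + 1) + x - 1 = (⌊x⌋ : ℝ) := by
  have hpow : (0 : ℝ) < 2 ^ n := by positivity
  have h1 : -x / 2 ^ n + 1 = 1 - x / 2 ^ n := by ring
  have h0 : 0 ≤ x / 2 ^ n := by positivity
  have hlt : x / 2 ^ n < 1 := (div_lt_one hpow).mpr hx1
  rw [h1, idealDelta_iter n _ h0 hlt, mul_div_cancel₀ x (ne_of_gt hpow), Int.fract]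
  ring
end

section
/- (Width necessity under the Euclidean norm: first-layer collision) Let d, N, m be positive integers with 2 ≤ N and N − 1 ≤ d, let ρ ∈ (0, 1), and let W : ℝ^d → ℝ^m be any linear map with m < ρ²·(N − 1). Then there exist an index j ∈ {1, …, N − 1} and points x, x' ∈ ℝ^d such that ‖x − e_j‖₂ < ρ/2, ‖x'‖₂ < ρ/2, and W x = W x'. (Equivalently, some point of the open Euclidean ball B₂(e_j, ρ/2) and some point of B₂(0, ρ/2) are mapped to the same value by W, so W cannot separate these two balls.) -/
/-!
Let `P` be the orthogonal projection onto `(ker W)ᗮ`. Then `∑ⱼ ‖P eⱼ‖² = tr P = rank P ≤ m`,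
so `m < ρ² (N - 1)` forces `‖P eⱼ‖ < ρ` for one of the first `N - 1` basis vectors.
Since `eⱼ - P eⱼ ∈ ker W`, the points `eⱼ - P eⱼ / 2` and `P eⱼ / 2` then collide under `W`.
-/

open Module LinearMap Finset

section
variable {𝕜 E F : Type*} [RCLike 𝕜] [NormedAddCommGroup E] [InnerProductSpace 𝕜 E]

theorem Submodule.isProj_starProjection (K : Submodule 𝕜 E) [K.HasOrthogonalProjection] :
    IsProj K (K.starProjection : E →ₗ[𝕜] E) :=
  ⟨K.starProjection_apply_mem, fun _ hx => K.starProjection_eq_self_iff.mpr hx⟩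

theorem Submodule.trace_starProjection [FiniteDimensional 𝕜 E] (K : Submodule 𝕜 E) :
    trace 𝕜 E K.starProjection = finrank 𝕜 K :=
  K.isProj_starProjection.trace

theorem Submodule.inner_starProjection_self (K : Submodule 𝕜 E) [K.HasOrthogonalProjection]
    (u : E) : inner 𝕜 u (K.starProjection u) = (‖K.starProjection u‖ : 𝕜) ^ 2 := by
  rw [← inner_self_eq_norm_sq_to_K, K.inner_starProjection_left_eq_right,
    K.starProjection_eq_self_iff.mpr (K.starProjection_apply_mem u)]

theorem LinearMap.finrank_orthogonal_ker_le [FiniteDimensional 𝕜 E] [AddCommGroup F] [Module 𝕜 F]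
    [FiniteDimensional 𝕜 F] (W : E →ₗ[𝕜] F) : finrank 𝕜 (ker W)ᗮ ≤ finrank 𝕜 F := by
  have hK := (ker W).finrank_add_finrank_orthogonal
  have hW := W.finrank_range_add_finrank_ker
  have hR := (range W).finrank_le
  omega

theorem LinearMap.exists_apply_eq_of_norm_starProjection_lt [AddCommGroup F] [Module 𝕜 F]
    (W : E →ₗ[𝕜] F) [(ker W).HasOrthogonalProjection] {v : E} {ρ : ℝ}
    (hv : ‖(ker W)ᗮ.starProjection v‖ < ρ) :
    ∃ x x' : E, ‖x - v‖ < ρ / 2 ∧ ‖x'‖ < ρ / 2 ∧ W x = W x' := by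
  set q := (ker W)ᗮ.starProjection v
  have hq : ‖(2⁻¹ : 𝕜) • q‖ < ρ / 2 := by
    rw [norm_smul, norm_inv, RCLike.norm_two]
    linarith
  refine ⟨v - (2⁻¹ : 𝕜) • q, (2⁻¹ : 𝕜) • q, by simpa using hq, hq, ?_⟩
  have hvq : v - q ∈ ker W := by simp [q]
  rw [← sub_eq_zero, ← map_sub, ← mem_ker]
  convert hvq using 1
  rw [sub_sub, ← add_smul]
  norm_num
end

section
variable {ι E : Type*} [Fintype ι] [NormedAddCommGroup E] [InnerProductSpace ℝ E]
  [FiniteDimensional ℝ E]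

theorem OrthonormalBasis.sum_norm_sq_starProjection (b : OrthonormalBasis ι ℝ E)
    (K : Submodule ℝ E) : ∑ i, ‖K.starProjection (b i)‖ ^ 2 = finrank ℝ K := by
  rw [← K.trace_starProjection, trace_eq_sum_inner _ b]
  simp [K.inner_starProjection_self]

theorem OrthonormalBasis.exists_norm_sq_starProjection_lt (b : OrthonormalBasis ι ℝ E)
    (K : Submodule ℝ E) (s : Finset ι) {c : ℝ} (h : finrank ℝ K < c * #s) :
    ∃ i ∈ s, ‖K.starProjection (b i)‖ ^ 2 < c := by
  refine exists_lt_of_sum_lt ?_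
  calc ∑ i ∈ s, ‖K.starProjection (b i)‖ ^ 2
      ≤ ∑ i, ‖K.starProjection (b i)‖ ^ 2 :=
        sum_le_univ_sum_of_nonneg fun _ => by positivity
    _ = finrank ℝ K := b.sum_norm_sq_starProjection K
    _ < ∑ _i ∈ s, c := by rwa [sum_const, nsmul_eq_mul, mul_comm]
end

theorem width_necessity_euclidean_general
    (d N m : ℕ) (hNd : N - 1 ≤ d)
    (ρ : ℝ) (hρ0 : 0 < ρ)
    (W : EuclideanSpace ℝ (Fin d) →ₗ[ℝ] EuclideanSpace ℝ (Fin m))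
    (hm : (m : ℝ) < ρ ^ 2 * ((N : ℝ) - 1)) :
    ∃ j : Fin d, (j : ℕ) < N - 1 ∧
      ∃ x x' : EuclideanSpace ℝ (Fin d),
        ‖x - EuclideanSpace.single j 1‖ < ρ / 2 ∧ ‖x'‖ < ρ / 2 ∧ W x = W x' := by
  let s : Finset (Fin d) := {j | (j : ℕ) < N - 1}
  have hs : #s = N - 1 := by simp [s, Fin.card_filter_val_lt, hNd]
  have hK : (finrank ℝ (ker W)ᗮ : ℝ) < ρ ^ 2 * #s := calc
    (finrank ℝ (ker W)ᗮ : ℝ) ≤ m := by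
      exact_mod_cast W.finrank_orthogonal_ker_le.trans finrank_euclideanSpace_fin.le
    _ < ρ ^ 2 * ((N : ℝ) - 1) := hm
    _ ≤ ρ ^ 2 * #s := by
      rw [hs]
      gcongr
      -- only `≤`: the truncated `N - 1 : ℕ` exceeds `(N : ℝ) - 1` when `N = 0`
      exact sub_le_iff_le_add.mpr (mod_cast (by omega : N ≤ N - 1 + 1))
  obtain ⟨j, hj, hPj⟩ :=
    (EuclideanSpace.basisFun (Fin d) ℝ).exists_norm_sq_starProjection_lt _ s hK
  obtain ⟨x, x', hx, hx', hW⟩ :=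
    W.exists_apply_eq_of_norm_starProjection_lt (lt_of_pow_lt_pow_left₀ 2 hρ0.le hPj)
  exact ⟨j, by simpa [s] using hj, x, x', by simpa using hx, hx', hW⟩

/-- **Width necessity under the Euclidean norm: first-layer collision.**
If `2 ≤ N`, `N - 1 ≤ d`, `ρ ∈ (0,1)`, and `W : ℝ^d → ℝ^m` is linear with
`m < ρ²(N-1)`, then some point of the open Euclidean ball `B₂(e_j, ρ/2)` (for some
`j ∈ {1,…,N-1}`) and some point of `B₂(0, ρ/2)` are mapped to the same value by `W`. -/
theorem width_necessity_euclidean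
    (d N m : ℕ) (hd : 1 ≤ d) (hm0 : 1 ≤ m) (hN : 2 ≤ N) (hNd : N - 1 ≤ d)
    (ρ : ℝ) (hρ0 : 0 < ρ) (hρ1 : ρ < 1)
    (W : EuclideanSpace ℝ (Fin d) →ₗ[ℝ] EuclideanSpace ℝ (Fin m))
    (hm : (m : ℝ) < ρ ^ 2 * ((N : ℝ) - 1)) :
    ∃ j : Fin d, (j : ℕ) < N - 1 ∧
      ∃ x x' : EuclideanSpace ℝ (Fin d),
        ‖x - EuclideanSpace.single j 1‖ < ρ / 2 ∧ ‖x'‖ < ρ / 2 ∧ W x = W x' :=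
  width_necessity_euclidean_general d N m hNd ρ hρ0 W hm
end

section
/- (Width necessity under the ℓ∞ norm: first-layer collision) Let d, N, m be positive integers with 2 ≤ N and N − 1 ≤ d, let ρ ∈ (1/2, 1), and let W : ℝ^d → ℝ^m be any linear map with m < N − 1. Then there exist an index j ∈ {1, …, N − 1} and points x, x' ∈ ℝ^d such that ‖x − e_j‖_∞ < ρ/2, ‖x'‖_∞ < ρ/2, and W x = W x'. (Equivalently, some point of the open ℓ∞ ball B_∞(e_j, ρ/2) and some point of B_∞(0, ρ/2) are mapped to the same value by W, so W cannot separate these two balls.) -/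
/-!
Since `m < N - 1`, the restriction of `W` to the first `N - 1` coordinates has a nonzero kernel
vector; scaled so that its largest coordinate, at some index `j`, equals `1`, it becomes
`u ∈ ker W` with `u j = 1` and `‖u‖∞ ≤ 1`. Then `y = (2 e_j - u) / 4` satisfies `‖y‖∞ ≤ 1/4`,
and `x = e_j - y`, `x' = y` differ by `u / 2`, so `W x = W x'`.
-/

open Module

theorem exists_ne_zero_map_extend_eq_zero {K ι κ F : Type*} [Field K] [Fintype κ]
    [AddCommGroup F] [Module K F] [FiniteDimensional K F]
    (W : (ι → K) →ₗ[K] F) (s : κ → ι) (h : finrank K F < Fintype.card κ) :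
    ∃ w : κ → K, w ≠ 0 ∧ W (Function.extend s w 0) = 0 := by
  have hker : LinearMap.ker (W ∘ₗ Function.ExtendByZero.linearMap K s) ≠ ⊥ :=
    LinearMap.ker_ne_bot_of_finrank_lt (by simpa using h)
  obtain ⟨w, hw, hw0⟩ := Submodule.exists_mem_ne_zero_of_ne_bot hker
  exact ⟨w, hw0, hw⟩

theorem exists_apply_ne_zero_abs_le {κ : Type*} [Finite κ] {w : κ → ℝ} (hw : w ≠ 0) :
    ∃ j, w j ≠ 0 ∧ ∀ k, |w k| ≤ |w j| := by
  obtain ⟨k₀, -⟩ := Function.ne_iff.1 hw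
  have : Nonempty κ := ⟨k₀⟩
  obtain ⟨j, hj⟩ := Finite.exists_max fun k => |w k|
  refine ⟨j, fun hj0 => hw (funext fun k => ?_), hj⟩
  simpa [hj0] using hj k

theorem abs_extend_zero_le {ι κ : Type*} (s : κ → ι) {w : κ → ℝ} {c : ℝ} (hc : 0 ≤ c)
    (hw : ∀ k, |w k| ≤ c) (i : ι) : |Function.extend s w 0 i| ≤ c := by
  classical
  rw [Function.extend_def]
  split_ifs
  · exact hw _
  · simpa using hc

theorem exists_mem_ker_apply_eq_one_norm_le_one {ι κ F : Type*} [Fintype ι] [Fintype κ]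
    [AddCommGroup F] [Module ℝ F] [FiniteDimensional ℝ F]
    (W : (ι → ℝ) →ₗ[ℝ] F) {s : κ → ι} (hs : s.Injective) (h : finrank ℝ F < Fintype.card κ) :
    ∃ j u, W u = 0 ∧ u (s j) = 1 ∧ ‖u‖ ≤ 1 := by
  obtain ⟨w, hw0, hWw⟩ := exists_ne_zero_map_extend_eq_zero W s h
  obtain ⟨j, hj0, hj⟩ := exists_apply_ne_zero_abs_le hw0
  refine ⟨j, (w j)⁻¹ • Function.extend s w 0, by rw [map_smul, hWw, smul_zero], ?_, ?_⟩
  · simp [hs.extend_apply, hj0]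
  · refine (pi_norm_le_iff_of_nonneg zero_le_one).2 fun i => ?_
    rw [Pi.smul_apply, smul_eq_mul, norm_mul, norm_inv, Real.norm_eq_abs, Real.norm_eq_abs,
      inv_mul_le_one₀ (abs_pos.2 hj0)]
    exact abs_extend_zero_le s (abs_nonneg _) hj i

theorem norm_two_smul_single_sub_le_one {ι : Type*} [Fintype ι] [DecidableEq ι] {u : ι → ℝ}
    {j : ι} (hu : ‖u‖ ≤ 1) (huj : u j = 1) : ‖(2 : ℝ) • Pi.single j 1 - u‖ ≤ 1 := by
  refine (pi_norm_le_iff_of_nonneg zero_le_one).2 fun k => ?_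
  rcases eq_or_ne k j with rfl | hk
  · norm_num [huj]
  · simpa [hk] using norm_le_pi_norm u k |>.trans hu

theorem width_necessity_linf_general
    (d N m : ℕ) (hNd : N - 1 ≤ d)
    (ρ : ℝ) (hρ0 : 1 / 2 < ρ)
    (W : (Fin d → ℝ) →ₗ[ℝ] (Fin m → ℝ))
    (hm : m < N - 1) :
    ∃ j : Fin d, (j : ℕ) < N - 1 ∧
      ∃ x x' : Fin d → ℝ,
        ‖x - Pi.single j 1‖ < ρ / 2 ∧ ‖x'‖ < ρ / 2 ∧ W x = W x' := by
  obtain ⟨j, u, hWu, huj, hu⟩ :=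
    exists_mem_ker_apply_eq_one_norm_le_one W (Fin.castLE_injective hNd) (by simpa using hm)
  set e : Fin d → ℝ := Pi.single (Fin.castLE hNd j) 1
  set y : Fin d → ℝ := (4 : ℝ)⁻¹ • ((2 : ℝ) • e - u)
  have hy : ‖y‖ < ρ / 2 := by
    calc ‖y‖ = 4⁻¹ * ‖(2 : ℝ) • e - u‖ := by simp [y, norm_smul]
      _ ≤ 4⁻¹ * 1 := by gcongr; exact norm_two_smul_single_sub_le_one hu huj
      _ < ρ / 2 := by linarith
  refine ⟨Fin.castLE hNd j, j.isLt, e - y, y, ?_, hy, ?_⟩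
  · rwa [sub_sub_cancel_left, norm_neg]
  rw [← sub_eq_zero, ← map_sub, show e - y - y = (2 : ℝ)⁻¹ • u by simp only [y]; module,
    map_smul, hWu, smul_zero]

/-- **Width necessity under the `ℓ∞` norm: first-layer collision.**
If `2 ≤ N`, `N - 1 ≤ d`, `ρ ∈ (1/2, 1)`, and `W : ℝ^d → ℝ^m` is linear with
`m < N - 1`, then some point of the open `ℓ∞` ball `B_∞(e_j, ρ/2)` (for some
`j ∈ {1,…,N-1}`) and some point of `B_∞(0, ρ/2)` are mapped to the same value by `W`.
Here `ℝ^d` carries the sup norm of `Fin d → ℝ`. -/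
theorem width_necessity_linf
    (d N m : ℕ) (hd : 1 ≤ d) (hm0 : 1 ≤ m) (hN : 2 ≤ N) (hNd : N - 1 ≤ d)
    (ρ : ℝ) (hρ0 : 1 / 2 < ρ) (hρ1 : ρ < 1)
    (W : (Fin d → ℝ) →ₗ[ℝ] (Fin m → ℝ))
    (hm : m < N - 1) :
    ∃ j : Fin d, (j : ℕ) < N - 1 ∧
      ∃ x x' : Fin d → ℝ,
        ‖x - Pi.single j 1‖ < ρ / 2 ∧ ‖x'‖ < ρ / 2 ∧ W x = W x' :=
  width_necessity_linf_general d N m hNd ρ hρ0 W hm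
end
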